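/- Let B be a string with period p where p ≤ |Q| ≤ |B|. Then every occurrence of Q in B is of the form y + j·p for some occurrence position y ≤ 2|Q| - 1 of Q in B and some j ≥ 0. Equivalently: if Q occurs in B at position z > 2|Q| - 1, then Q also occurs at position z - p. -/

import Mathlib

def HasPeriod {α : Type*} (S : List α) (p : ℕ) : Prop :=
  ∀ i : ℕ, 1 ≤ i → i + p ≤ S.length → S[i - 1]? = S[i + p - 1]?

def Occurs {α : Type*} (Q B : List α) (i : ℕ) : Prop :=
  1 ≤ i ∧ i + Q.length - 1 ≤ B.length ∧ (B.drop (i - 1)).take Q.length = Q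

section

variable {α : Type*}

theorem List.take_length_drop_eq_iff {l Q : List α} {n : ℕ} :
    (l.drop n).take Q.length = Q ↔ ∀ k < Q.length, l[n + k]? = Q[k]? := by
  constructor
  · intro h k hk
    simpa [List.getElem?_take, hk] using congrArg (·[k]?) h
  · intro h
    apply List.ext_getElem?
    intro k
    rcases lt_or_ge k Q.length with hk | hk
    · rw [List.getElem?_take_of_lt hk, List.getElem?_drop, h k hk]
    · rw [List.getElem?_take_eq_none hk, List.getElem?_eq_none hk]

theorem HasPeriod.getElem?_add {S : List α} {p i : ℕ} (hper : HasPeriod S p)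
    (hi : i + p < S.length) : S[i]? = S[i + p]? := by
  simpa using hper (i + 1) (by omega) (by omega)

theorem Occurs.sub_period {Q B : List α} {p z : ℕ} (hper : HasPeriod B p)
    (hz : Occurs Q B z) (hpz : p < z) : Occurs Q B (z - p) := by
  obtain ⟨hz1, hzlen, hzQ⟩ := hz
  rw [List.take_length_drop_eq_iff] at hzQ
  refine ⟨by omega, by omega, List.take_length_drop_eq_iff.2 fun k hk => ?_⟩
  calc B[z - p - 1 + k]? = B[z - p - 1 + k + p]? := hper.getElem?_add (by omega)
    _ = B[z - 1 + k]? := by congr 1; omega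
    _ = Q[k]? := hzQ k hk

end

theorem late_occurrence_shifts_back_general {α : Type*} (B Q : List α) (p z : ℕ)
    (hper : HasPeriod B p) (hpQ : p ≤ Q.length)
    (hz : Occurs Q B z) (hlate : z > 2 * Q.length - 1) :
    Occurs Q B (z - p) :=
  hz.sub_period hper (by omega)

/-- late occurrences can be shifted back by the period. -/
theorem late_occurrence_shifts_back {α : Type*} (B Q : List α) (p z : ℕ)
    (hper : HasPeriod B p) (hpQ : p ≤ Q.length) (hQB : Q.length ≤ B.length)
    (hz : Occurs Q B z) (hlate : z > 2 * Q.length - 1) :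
    Occurs Q B (z - p) :=
  late_occurrence_shifts_back_general B Q p z hper hpQ hz hlate
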